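/- arXiv:1003.2131 — 6 statements merged into one kernel-verified Lean document; each statement's English description precedes it below -/
import Mathlib

section
/- The resultant of the polynomials u^2 + uv + v^2 and 2u^3 + v^3 with respect to u is 9v^6, and the resultant with respect to v is 9u^6. Consequently, if u and v are coprime integers, then gcd(u^2 + uv + v^2, 2u^3 + v^3) divides 9. -/
open Polynomial

/-- The Sylvester matrix of two polynomials `f`, `g` regarded as having degrees `m`
and `n` respectively: an `(m + n) × (m + n)` matrix whose first `n` rows carry the
coefficients of `f` (in descending order, shifted) and whose last `m` rows carry the
coefficients of `g`. -/
def sylvesterMatrix {R : Type*} [CommRing R] (f g : R[X]) (m n : ℕ) :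
    Matrix (Fin (m + n)) (Fin (m + n)) R := fun i j =>
  if (i : ℕ) < n then
    (if (i : ℕ) ≤ (j : ℕ) ∧ (j : ℕ) ≤ (i : ℕ) + m then f.coeff (m - ((j : ℕ) - (i : ℕ)))
     else 0)
  else
    (if (i : ℕ) - n ≤ (j : ℕ) ∧ (j : ℕ) ≤ ((i : ℕ) - n) + n then
      g.coeff (n - ((j : ℕ) - ((i : ℕ) - n)))
     else 0)

/-- The resultant of two polynomials of degrees `m` and `n`, as the determinant of
their Sylvester matrix. -/
def resultantAux {R : Type*} [CommRing R] (f g : R[X]) (m n : ℕ) : R :=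
  (sylvesterMatrix f g m n).det


/-!
With `a = u² + uv + v²` and `b = 2u³ + v³` one has `b + (u - v) a = 3u³` and
`b - 2(u - v) a = 3v³`, so a common divisor of `a` and `b` divides `3u³` and `3v³`, hence
divides `3` when `u` and `v` are coprime.
-/

lemma sylvesterMatrix_two_three {R : Type*} [CommRing R] (f g : R[X]) :
    sylvesterMatrix f g 2 3 =
      !![f.coeff 2, f.coeff 1, f.coeff 0, 0, 0;
         0, f.coeff 2, f.coeff 1, f.coeff 0, 0;
         0, 0, f.coeff 2, f.coeff 1, f.coeff 0;
         g.coeff 3, g.coeff 2, g.coeff 1, g.coeff 0, 0;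
         0, g.coeff 3, g.coeff 2, g.coeff 1, g.coeff 0] := by
  ext i j
  fin_cases i <;> fin_cases j <;> rfl

lemma resultant_in_u :
    resultantAux
      (X ^ 2 + C Polynomial.X * X + C (Polynomial.X ^ 2) : (Polynomial ℤ)[X])
      (C 2 * X ^ 3 + C (Polynomial.X ^ 3)) 2 3 = 9 * Polynomial.X ^ 6 := by
  rw [resultantAux, sylvesterMatrix_two_three]
  simp [-map_pow, coeff_C, coeff_X, coeff_X_pow, coeff_C_mul, Matrix.det_succ_row_zero,
    Fin.sum_univ_succ, Fin.succAbove]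
  ring

lemma resultant_in_v :
    resultantAux
      (C (Polynomial.X ^ 2) + C Polynomial.X * X + X ^ 2 : (Polynomial ℤ)[X])
      (C (2 * Polynomial.X ^ 3) + X ^ 3) 2 3 = 9 * Polynomial.X ^ 6 := by
  rw [resultantAux, sylvesterMatrix_two_three]
  simp [-map_pow, coeff_C, coeff_X, coeff_X_pow, Matrix.det_succ_row_zero,
    Fin.sum_univ_succ, Fin.succAbove]
  ring

lemma IsCoprime.dvd_of_dvd_mul_pow {R : Type*} [CommRing R] {u v d c : R} (huv : IsCoprime u v)
    (n : ℕ) (hu : d ∣ c * u ^ n) (hv : d ∣ c * v ^ n) : d ∣ c := by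
  obtain ⟨x, y, hxy⟩ := huv.pow (m := n) (n := n)
  have hc : c = x * (c * u ^ n) + y * (c * v ^ n) := by linear_combination -c * hxy
  rw [hc]
  exact dvd_add (hu.mul_left x) (hv.mul_left y)

lemma IsCoprime.dvd_three_of_dvd_of_dvd {R : Type*} [CommRing R] {u v d : R}
    (huv : IsCoprime u v) (ha : d ∣ u ^ 2 + u * v + v ^ 2) (hb : d ∣ 2 * u ^ 3 + v ^ 3) :
    d ∣ 3 := by
  refine huv.dvd_of_dvd_mul_pow 3 ?_ ?_
  · have h : 3 * u ^ 3 = 2 * u ^ 3 + v ^ 3 + (u - v) * (u ^ 2 + u * v + v ^ 2) := by ring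
    exact h ▸ dvd_add hb (ha.mul_left _)
  · have h : 3 * v ^ 3 = 2 * u ^ 3 + v ^ 3 - 2 * (u - v) * (u ^ 2 + u * v + v ^ 2) := by ring
    exact h ▸ dvd_sub hb (ha.mul_left _)

/-- The resultant of `u² + uv + v²` and `2u³ + v³` with respect to `u` is `9v⁶`, the
resultant with respect to `v` is `9u⁶`; consequently, for coprime integers `u, v`,
`gcd(u² + uv + v², 2u³ + v³)` divides `9`. -/
theorem resultant_nine :
    -- resultant in u: coefficients in ℤ[v]
    resultantAux
      (X ^ 2 + C Polynomial.X * X + C (Polynomial.X ^ 2) : (Polynomial ℤ)[X])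
      (C 2 * X ^ 3 + C (Polynomial.X ^ 3)) 2 3 = 9 * Polynomial.X ^ 6 ∧
    -- resultant in v: coefficients in ℤ[u]
    resultantAux
      (C (Polynomial.X ^ 2) + C Polynomial.X * X + X ^ 2 : (Polynomial ℤ)[X])
      (C (2 * Polynomial.X ^ 3) + X ^ 3) 2 3 = 9 * Polynomial.X ^ 6 ∧
    ∀ u v : ℤ, IsCoprime u v →
      (Int.gcd (u ^ 2 + u * v + v ^ 2) (2 * u ^ 3 + v ^ 3) : ℤ) ∣ 9 := by
  refine ⟨resultant_in_u, resultant_in_v, fun u v huv => ?_⟩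
  have h3 := huv.dvd_three_of_dvd_of_dvd (Int.gcd_dvd_left _ _) (Int.gcd_dvd_right _ _)
  exact h3.trans (by norm_num)
end

section
/- The only integer solutions (u,v) with gcd(u,v) = 1 to u^6 + u^3 v^3 + v^6 = 3^k with k ≥ 2 do not exist; that is, if u, v are coprime integers and u^6 + u^3 v^3 + v^6 = 3^k for some integer k ≥ 0, then k ≤ 1. -/
/-!
Cubes modulo 9 lie in `{0, 1, -1}`, and on such `x, y` the form `x² + xy + y²` takes only the
values `0, 1, 3` modulo 9, vanishing only for `x = y = 0`. So `9 ∣ u⁶ + u³v³ + v⁶` forces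
`3 ∣ u` and `3 ∣ v`, which coprimality forbids.
-/

lemma zmod_nine_pow_three_eq_zero_of_sextic_eq_zero (a b : ZMod 9)
    (h : a ^ 6 + a ^ 3 * b ^ 3 + b ^ 6 = 0) : a ^ 3 = 0 ∧ b ^ 3 = 0 := by
  revert a b
  decide

lemma three_dvd_of_zmod_nine_pow_three_eq_zero {u : ℤ} (h : (u : ZMod 9) ^ 3 = 0) : 3 ∣ u := by
  have h9 : (9 : ℤ) ∣ u ^ 3 := (ZMod.intCast_zmod_eq_zero_iff_dvd _ 9).mp (by push_cast; exact h)
  exact Int.prime_three.dvd_of_dvd_pow (dvd_trans (by norm_num) h9)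

lemma three_dvd_of_nine_dvd_sextic {u v : ℤ} (h : 9 ∣ u ^ 6 + u ^ 3 * v ^ 3 + v ^ 6) :
    3 ∣ u ∧ 3 ∣ v := by
  have hz := (ZMod.intCast_zmod_eq_zero_iff_dvd _ 9).mpr h
  push_cast at hz
  obtain ⟨hu, hv⟩ := zmod_nine_pow_three_eq_zero_of_sextic_eq_zero _ _ hz
  exact ⟨three_dvd_of_zmod_nine_pow_three_eq_zero hu, three_dvd_of_zmod_nine_pow_three_eq_zero hv⟩

/-- If `u, v` are coprime integers and `u^6 + u^3 v^3 + v^6 = 3^k` for some `k ≥ 0`,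
then `k ≤ 1`. -/
theorem sextic_three_power_bound (u v : ℤ) (h : IsCoprime u v) (k : ℕ)
    (hk : u ^ 6 + u ^ 3 * v ^ 3 + v ^ 6 = 3 ^ k) : k ≤ 1 := by
  by_contra! hk2
  have h9 : (9 : ℤ) ∣ u ^ 6 + u ^ 3 * v ^ 3 + v ^ 6 :=
    hk ▸ (pow_dvd_pow 3 hk2 : (3 : ℤ) ^ 2 ∣ 3 ^ k)
  obtain ⟨h3u, h3v⟩ := three_dvd_of_nine_dvd_sextic h9
  exact Int.prime_three.not_isUnit (h.isUnit_of_dvd' h3u h3v)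
end

section
/- If u, v are coprime integers and u^4 + 2u^3 v + 2u v^3 + v^4 = ±3^k for some integer k ≥ 2, then a contradiction arises; hence k ≤ 1. (Proof idea: modulo 3 the left side is (v-u)^4, forcing u ≡ v mod 3, then u^3 ≡ v^3 mod 9 gives 3u^3(u+v) ≡ 0 mod 9, forcing 3 | u and 3 | v, contradicting coprimality.) -/
/-! For `k ≥ 2` the quartic is divisible by 9. Modulo 3 it is `(u - v) ^ 4`, so `v = u + 3 t`;
expanding around `v = u` it is `6 u ^ 4` modulo 9, so `3 ∣ u` and then `3 ∣ v`, contradicting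
coprimality. -/

namespace QuarticThreePower

def quartic (u v : ℤ) : ℤ := u ^ 4 + 2 * u ^ 3 * v + 2 * u * v ^ 3 + v ^ 4

lemma quartic_eq_sub_pow_four_add (u v : ℤ) :
    quartic u v = (u - v) ^ 4 + 3 * (2 * u * v * (u ^ 2 - u * v + v ^ 2)) := by
  unfold quartic; ring

lemma quartic_add_three_mul (u t : ℤ) :
    quartic u (u + 3 * t) =
      6 * u ^ 4 + 9 * (4 * u ^ 3 * t + 12 * u ^ 2 * t ^ 2 + 18 * u * t ^ 3 + 9 * t ^ 4) := by
  unfold quartic; ring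

lemma three_dvd_sub_of_three_dvd_quartic {u v : ℤ} (h : 3 ∣ quartic u v) : 3 ∣ u - v := by
  rw [quartic_eq_sub_pow_four_add, dvd_add_left (dvd_mul_right 3 _)] at h
  exact Int.prime_three.dvd_of_dvd_pow h

lemma three_dvd_of_nine_dvd_quartic {u v : ℤ} (h : 9 ∣ quartic u v) : 3 ∣ u ∧ 3 ∣ v := by
  obtain ⟨t, ht⟩ : 3 ∣ v - u :=
    dvd_sub_comm.mp (three_dvd_sub_of_three_dvd_quartic (dvd_trans ⟨3, rfl⟩ h))
  obtain rfl : v = u + 3 * t := by linarith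
  rw [quartic_add_three_mul, dvd_add_left (dvd_mul_right 9 _),
    show (6 : ℤ) * u ^ 4 = 3 * (2 * u ^ 4) by ring, show (9 : ℤ) = 3 * 3 by rfl,
    mul_dvd_mul_iff_left three_ne_zero] at h
  have hu : 3 ∣ u :=
    Int.prime_three.dvd_of_dvd_pow ((Int.prime_three.dvd_or_dvd h).resolve_left (by norm_num))
  exact ⟨hu, dvd_add hu (dvd_mul_right 3 t)⟩

end QuarticThreePower

open QuarticThreePower in
/-- If `u, v` are coprime integers and `u^4 + 2u^3 v + 2u v^3 + v^4 = ±3^k`,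
then `k ≤ 1`. -/
theorem quartic_three_power_bound (u v : ℤ) (h : IsCoprime u v) (k : ℕ)
    (hk : u ^ 4 + 2 * u ^ 3 * v + 2 * u * v ^ 3 + v ^ 4 = 3 ^ k ∨
          u ^ 4 + 2 * u ^ 3 * v + 2 * u * v ^ 3 + v ^ 4 = -(3 ^ k)) : k ≤ 1 := by
  by_contra! h2k
  have h9 : 9 ∣ quartic u v := by
    have h9pow : (9 : ℤ) ∣ 3 ^ k := by simpa using pow_dvd_pow (3 : ℤ) h2k
    rcases hk with hk | hk <;> rw [quartic, hk]
    exacts [h9pow, h9pow.neg_right]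
  obtain ⟨hu, hv⟩ := three_dvd_of_nine_dvd_quartic h9
  exact absurd (h.isUnit_of_dvd' hu hv) (by norm_num [Int.isUnit_iff])
end

section
/- Let m be an integer and A, B, C integers with gcd(A,B) = gcd(C,B) = 1 satisfying C^2 = A^3 - 432 m^2 B^6. Then ord_2(A) ≠ 1; that is, if 2 divides A then 4 divides A. -/
/-!
If `A ≡ 2 (mod 4)` then `A³ ≡ 8 (mod 16)`; since `16 ∣ 432`, the curve equation would make `8` a
square modulo `16`, which it is not.
-/

lemma ZMod.sq_ne_eight_sixteen (c : ZMod 16) : c ^ 2 ≠ 8 := by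
  revert c; decide

lemma ZMod.cube_four_mul_add_two_sixteen (k : ZMod 16) : (4 * k + 2) ^ 3 = 8 := by
  revert k; decide

lemma Int.four_dvd_of_sq_eq_cube_sub {A C k : ℤ} (h : C ^ 2 = A ^ 3 - 16 * k)
    (h2 : 2 ∣ A) : 4 ∣ A := by
  by_contra h4
  obtain ⟨j, rfl⟩ : ∃ j, A = 4 * j + 2 := ⟨A / 4, by omega⟩
  have h16 := congrArg (fun x : ℤ => (x : ZMod 16)) h
  push_cast at h16
  rw [ZMod.cube_four_mul_add_two_sixteen, show (16 : ZMod 16) = 0 from rfl, zero_mul,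
    sub_zero] at h16
  exact ZMod.sq_ne_eight_sixteen _ h16

lemma padicValInt_ne_one_of_sq_dvd {p : ℕ} [Fact p.Prime] {a : ℤ}
    (h : (p : ℤ) ∣ a → (p : ℤ) ^ 2 ∣ a) : padicValInt p a ≠ 1 := by
  intro hval
  have hp : (p : ℤ) ∣ a := by
    simpa using (padicValInt_dvd_iff 1 a).mpr (Or.inr hval.ge)
  rcases (padicValInt_dvd_iff 2 a).mp (h hp) with rfl | hle
  · simp at hval
  · omega

theorem ord2_ne_one_general (m A B C : ℤ)
    (hcurve : C ^ 2 = A ^ 3 - 432 * m ^ 2 * B ^ 6) :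
    padicValInt 2 A ≠ 1 ∧ ((2 : ℤ) ∣ A → (4 : ℤ) ∣ A) := by
  have key : (2 : ℤ) ∣ A → (4 : ℤ) ∣ A :=
    Int.four_dvd_of_sq_eq_cube_sub (k := 27 * m ^ 2 * B ^ 6) (by rw [hcurve]; ring)
  exact ⟨padicValInt_ne_one_of_sq_dvd (by norm_num; exact key), key⟩

/-- If `C² = A³ - 432 m² B⁶` with `(A, B)` and `(C, B)` coprime, then `ord₂(A) ≠ 1`;
that is, if `2 ∣ A` then `4 ∣ A`. -/
theorem ord2_ne_one (m A B C : ℤ) (hA : A ≠ 0)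
    (hAB : IsCoprime A B) (hCB : IsCoprime C B)
    (hcurve : C ^ 2 = A ^ 3 - 432 * m ^ 2 * B ^ 6) :
    padicValInt 2 A ≠ 1 ∧ ((2 : ℤ) ∣ A → (4 : ℤ) ∣ A) :=
  ord2_ne_one_general m A B C hcurve
end

section
/- Every root α of the polynomial h(X) = X^8 + 6X^7 + 12X^6 + 3X^5 - 30X^4 - 63X^3 - 63X^2 - 36X - 9 in an algebraic closure of ℚ_3 has 3-adic absolute value |α|_3 = 3^{-1/4}; equivalently, the Newton polygon of h with respect to the prime 3 consists of a single segment of slope -1/4. -/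
/-!
In an ultrametric field a sum in which one term strictly dominates all the others cannot
vanish. If the coefficients of a monic polynomial of degree `n` satisfy `‖cᵢ‖ ≤ s ^ (n - i)`
with equality for `i = 0` (its Newton polygon is a single segment), then at any `x` with
`‖x‖ < s` the constant term dominates and at any `x` with `‖x‖ > s` the leading term does, so
every root has norm `s`. For `h` the 3-adic valuations of the coefficients are
`2, 2, 2, 2, 1, 1, 1, 1, 0`, all on or above the segment from `(0, 2)` to `(8, 0)`, and
`s = 3 ^ (-1/4)`.
-/

open Polynomial

/-- `h(X) = X⁸ + 6X⁷ + 12X⁶ + 3X⁵ - 30X⁴ - 63X³ - 63X² - 36X - 9`. -/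
noncomputable def h₅₁ : ℤ[X] :=
  X ^ 8 + C 6 * X ^ 7 + C 12 * X ^ 6 + C 3 * X ^ 5 - C 30 * X ^ 4 - C 63 * X ^ 3
    - C 63 * X ^ 2 - C 36 * X - C 9

theorem IsUltrametricDist.norm_sum_eq_of_forall_ne_norm_lt {M ι : Type*}
    [SeminormedAddCommGroup M] [IsUltrametricDist M] {s : Finset ι} {f : ι → M} {j : ι}
    (hj : j ∈ s) (h : ∀ i ∈ s, i ≠ j → ‖f i‖ < ‖f j‖) : ‖∑ i ∈ s, f i‖ = ‖f j‖ := by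
  classical
  rw [← Finset.add_sum_erase s f hj]
  rcases (s.erase j).eq_empty_or_nonempty with hempty | hne
  · simp [hempty]
  · have hlt : ‖∑ i ∈ s.erase j, f i‖ < ‖f j‖ :=
      (hne.norm_sum_le_sup'_norm f).trans_lt <| (Finset.sup'_lt_iff hne).2 fun i hi ↦
        h i (Finset.mem_of_mem_erase hi) (Finset.ne_of_mem_erase hi)
    rw [IsUltrametricDist.norm_add_eq_max_of_norm_ne_norm hlt.ne', max_eq_left hlt.le]

theorem Polynomial.Monic.norm_eq_of_eval_eq_zero {L : Type*} [NormedField L]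
    [IsUltrametricDist L] {p : L[X]} (hp : p.Monic) {s : ℝ} (hs : 0 ≤ s)
    (hcoeff : ∀ i, ‖p.coeff i‖ ≤ s ^ (p.natDegree - i))
    (hcoeff_zero : ‖p.coeff 0‖ = s ^ p.natDegree) {x : L} (hx : p.eval x = 0) :
    ‖x‖ = s := by
  set n := p.natDegree
  have hterm : ∀ i, ‖p.coeff i * x ^ i‖ ≤ s ^ (n - i) * ‖x‖ ^ i := fun i ↦ by
    rw [norm_mul, norm_pow]
    exact mul_le_mul_of_nonneg_right (hcoeff i) (by positivity)
  have no_dominant_term : ∀ j ∈ Finset.range (n + 1), 0 < ‖p.coeff j * x ^ j‖ →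
      (∀ i ∈ Finset.range (n + 1), i ≠ j → ‖p.coeff i * x ^ i‖ < ‖p.coeff j * x ^ j‖) → False :=
    fun j hj hpos h ↦ by
      rw [← IsUltrametricDist.norm_sum_eq_of_forall_ne_norm_lt hj h, ← eval_eq_sum_range, hx,
        norm_zero] at hpos
      exact hpos.false
  rcases lt_trichotomy ‖x‖ s with hlt | heq | hgt
  · have hs0 : 0 < s := (norm_nonneg x).trans_lt hlt
    refine (no_dominant_term 0 (by simp) (by simpa [hcoeff_zero] using pow_pos hs0 n) fun i hi hi0 ↦ ?_).elim
    calc ‖p.coeff i * x ^ i‖ ≤ s ^ (n - i) * ‖x‖ ^ i := hterm i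
      _ < s ^ (n - i) * s ^ i :=
        mul_lt_mul_of_pos_left (pow_lt_pow_left₀ hlt (norm_nonneg x) hi0) (by positivity)
      _ = ‖p.coeff 0 * x ^ 0‖ := by
        rw [pow_zero, mul_one, hcoeff_zero, ← pow_add,
          Nat.sub_add_cancel (Nat.lt_succ_iff.1 (Finset.mem_range.1 hi))]
  · exact heq
  · have hx0 : 0 < ‖x‖ := hs.trans_lt hgt
    have hlead : ‖p.coeff n * x ^ n‖ = ‖x‖ ^ n := by
      rw [hp.coeff_natDegree, one_mul, norm_pow]
    refine (no_dominant_term n (by simp) (by rw [hlead]; positivity) fun i hi hin ↦ ?_).elim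
    have hin : i < n := lt_of_le_of_ne (Nat.lt_succ_iff.1 (Finset.mem_range.1 hi)) hin
    calc ‖p.coeff i * x ^ i‖ ≤ s ^ (n - i) * ‖x‖ ^ i := hterm i
      _ < ‖x‖ ^ (n - i) * ‖x‖ ^ i :=
        mul_lt_mul_of_pos_right (pow_lt_pow_left₀ hgt hs (by omega)) (by positivity)
      _ = ‖p.coeff n * x ^ n‖ := by rw [hlead, ← pow_add, Nat.sub_add_cancel hin.le]

theorem h₅₁_monic : h₅₁.Monic := by
  unfold h₅₁; monicity!

theorem h₅₁_natDegree : h₅₁.natDegree = 8 := by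
  unfold h₅₁; compute_degree!

theorem h₅₁_coeff_zero : h₅₁.coeff 0 = -9 := by
  simp [h₅₁]

-- `(8 - i + 3) / 4 = ⌈(8 - i) / 4⌉`: every point `(i, v₃(cᵢ))` lies on or above the segment
-- from `(0, 2)` to `(8, 0)`.
theorem three_pow_dvd_h₅₁_coeff (i : ℕ) : 3 ^ ((8 - i + 3) / 4) ∣ h₅₁.coeff i := by
  rcases Nat.lt_or_ge i 9 with hi | hi
  · interval_cases i <;> simp [h₅₁, coeff_X, coeff_X_pow]
  · rw [coeff_eq_zero_of_natDegree_lt (by rw [h₅₁_natDegree]; omega)]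
    exact dvd_zero _

theorem rpow_neg_one_div_four_pow_four {x : ℝ} (hx : 0 ≤ x) :
    (x ^ (-(1 / 4 : ℝ))) ^ 4 = x⁻¹ := by
  rw [← Real.rpow_natCast, ← Real.rpow_mul hx]
  norm_num [Real.rpow_neg_one]

theorem norm_h₅₁_coeff_le (i : ℕ) :
    ‖(h₅₁.coeff i : ℚ_[3])‖ ≤ ((3 : ℝ) ^ (-(1 / 4 : ℝ))) ^ (8 - i) := by
  set s := (3 : ℝ) ^ (-(1 / 4 : ℝ))
  have hs1 : s ≤ 1 := Real.rpow_le_one_of_one_le_of_nonpos (by norm_num) (by norm_num)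
  calc ‖(h₅₁.coeff i : ℚ_[3])‖ ≤ (3 : ℝ) ^ (-((8 - i + 3) / 4 : ℕ) : ℤ) :=
        (Padic.norm_int_le_pow_iff_dvd _ _).2 (by exact_mod_cast three_pow_dvd_h₅₁_coeff i)
    _ = s ^ (4 * ((8 - i + 3) / 4)) := by
        rw [pow_mul, rpow_neg_one_div_four_pow_four (by norm_num), zpow_neg, zpow_natCast, inv_pow]
    _ ≤ s ^ (8 - i) := pow_le_pow_of_le_one (by positivity) hs1 (by omega)

theorem norm_h₅₁_coeff_zero : ‖(h₅₁.coeff 0 : ℚ_[3])‖ = ((3 : ℝ) ^ (-(1 / 4 : ℝ))) ^ 8 := by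
  have h3 : ‖(3 : ℚ_[3])‖ = 3⁻¹ := by exact_mod_cast Padic.norm_p (p := 3)
  rw [h₅₁_coeff_zero, show (8 : ℕ) = 4 * 2 from rfl, pow_mul,
    rpow_neg_one_div_four_pow_four (by norm_num)]
  push_cast
  rw [norm_neg, show (9 : ℚ_[3]) = 3 ^ 2 by norm_num, norm_pow, h3]

/-- Every root of `h(X) = X⁸ + 6X⁷ + 12X⁶ + 3X⁵ - 30X⁴ - 63X³ - 63X² - 36X - 9` in any
normed field extension of `ℚ₃` (with the norm extending the 3-adic absolute value,
normalized by `|3|₃ = 1/3`) has absolute value `3^(-1/4)`; i.e. the Newton polygon of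
`h` at the prime 3 is a single segment of slope `-1/4`. -/
theorem roots_abs_three_pow_neg_quarter
    (L : Type*) [NontriviallyNormedField L] [Algebra ℚ_[3] L]
    (hiso : ∀ q : ℚ_[3], ‖algebraMap ℚ_[3] L q‖ = ‖q‖)
    (α : L) (hα : Polynomial.aeval α h₅₁ = 0) :
    ‖α‖ = (3 : ℝ) ^ (-(1 / 4 : ℝ)) := by
  have hnorm (k : ℤ) : ‖(k : L)‖ = ‖(k : ℚ_[3])‖ := by
    rw [← map_intCast (algebraMap ℚ_[3] L), hiso]
  have : IsUltrametricDist L :=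
    IsUltrametricDist.isUltrametricDist_of_forall_norm_natCast_le_one fun n ↦ by
      rw [← Int.cast_natCast, hnorm]
      exact Padic.norm_int_le_one n
  rw [aeval_def, eval₂_eq_eval_map] at hα
  refine (h₅₁_monic.map (algebraMap ℤ L)).norm_eq_of_eval_eq_zero (by positivity)
    (fun i ↦ ?_) ?_ hα <;>
  rw [coeff_map, h₅₁_monic.natDegree_map, h₅₁_natDegree, eq_intCast, hnorm]
  · exact norm_h₅₁_coeff_le i
  · exact norm_h₅₁_coeff_zero
end

section
/- Suppose (B_n) is a sequence of positive integers satisfying: for every prime p, if p divides B_n, then for all positive integers k, ord_p(B_{nk}) = ord_p(B_n) + ord_p(k). Then (B_n) is a strong divisibility sequence: gcd(B_r, B_n) = B_{gcd(r,n)} for all positive integers r, n, provided additionally that every prime dividing gcd(B_r, B_n) also divides B_{gcd(r,n)}. -/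
/-!
Write `r = d a`, `n = d b` with `d = gcd(r, n)` and `a, b` coprime. At a prime `p ∣ B_d` the
valuation relation gives `ord_p(gcd(B_r, B_n)) = ord_p(B_d) + min(ord_p a, ord_p b) = ord_p(B_d)`,
since `p` cannot divide both `a` and `b`. At any other prime both sides have valuation zero,
the left one because every prime dividing `gcd(B_r, B_n)` divides `B_d`.
-/

theorem padicValNat_gcd {p a b : ℕ} (hp : p.Prime) (ha : a ≠ 0) (hb : b ≠ 0) :
    padicValNat p (Nat.gcd a b) = min (padicValNat p a) (padicValNat p b) := by
  rw [← Nat.factorization_def _ hp, Nat.factorization_gcd ha hb, Finsupp.inf_apply,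
    Nat.factorization_def _ hp, Nat.factorization_def _ hp]

theorem Nat.Coprime.min_padicValNat_eq_zero {p a b : ℕ} (hp : p.Prime) (ha : a ≠ 0) (hb : b ≠ 0)
    (hab : a.Coprime b) : min (padicValNat p a) (padicValNat p b) = 0 := by
  rw [← padicValNat_gcd hp ha hb, hab.gcd_eq_one, padicValNat_one_right]

theorem padicValNat_gcd_apply_mul_of_coprime {B : ℕ → ℕ}
    (hord : ∀ (p n k : ℕ), p.Prime → 0 < n → 0 < k → p ∣ B n →
      padicValNat p (B (n * k)) = padicValNat p (B n) + padicValNat p k)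
    {p d a b : ℕ} (hp : p.Prime) (hd : 0 < d) (ha : 0 < a) (hb : 0 < b) (hab : a.Coprime b)
    (hBa : B (d * a) ≠ 0) (hBb : B (d * b) ≠ 0) (hpd : p ∣ B d) :
    padicValNat p (Nat.gcd (B (d * a)) (B (d * b))) = padicValNat p (B d) := by
  rw [padicValNat_gcd hp hBa hBb, hord p d a hp hd ha hpd, hord p d b hp hd hb hpd,
    min_add_add_left, hab.min_padicValNat_eq_zero hp ha.ne' hb.ne', add_zero]

/-- Abstract strong divisibility principle: if `(B_n)` is a sequence of positive
integers such that `ord_p(B_{nk}) = ord_p(B_n) + ord_p(k)` whenever `p` is a prime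
dividing `B_n`, and every prime dividing `gcd(B_r, B_n)` also divides `B_{gcd(r,n)}`,
then `gcd(B_r, B_n) = B_{gcd(r,n)}` for all positive `r, n`. -/
theorem strong_divisibility_of_ord_relation (B : ℕ → ℕ)
    (hpos : ∀ n, 0 < n → 0 < B n)
    (hord : ∀ (p n k : ℕ), p.Prime → 0 < n → 0 < k → p ∣ B n →
      padicValNat p (B (n * k)) = padicValNat p (B n) + padicValNat p k)
    (hclaim : ∀ (r n : ℕ), 0 < r → 0 < n → ∀ p : ℕ, p.Prime →
      p ∣ Nat.gcd (B r) (B n) → p ∣ B (Nat.gcd r n)) :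
    ∀ r n : ℕ, 0 < r → 0 < n → Nat.gcd (B r) (B n) = B (Nat.gcd r n) := by
  intro r n hr hn
  have hclaim_rn := hclaim r n hr hn
  obtain ⟨a, b, hab, hra, hnb⟩ := Nat.exists_coprime r n
  have hd : 0 < Nat.gcd r n := Nat.gcd_pos_of_pos_left n hr
  generalize Nat.gcd r n = d at *
  rw [mul_comm] at hra hnb
  subst hra hnb
  have hBr := (hpos _ hr).ne'
  have hBn := (hpos _ hn).ne'
  rw [Nat.eq_iff_prime_padicValNat_eq _ _ (Nat.gcd_ne_zero_left hBr) (hpos d hd).ne']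
  intro p hp
  by_cases hpd : p ∣ B d
  · exact padicValNat_gcd_apply_mul_of_coprime hord hp hd (Nat.pos_of_mul_pos_left hr)
      (Nat.pos_of_mul_pos_left hn) hab hBr hBn hpd
  · rw [padicValNat.eq_zero_of_not_dvd hpd,
      padicValNat.eq_zero_of_not_dvd fun h ↦ hpd (hclaim_rn p hp h)]
end
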